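/- Let φ be the morphism on the alphabet {0, 1, 0', −1} defined by φ(0) = 0 1 0' −1, φ(1) = 0 1 −1 1, φ(0') = 0' −1 0 1, φ(−1) = 0' −1 1 −1, and let ζ be the morphism on the same alphabet defined by ζ(0) = ζ(0') = 0 1 0' −1, ζ(1) = 0 1 −1 1 0' −1, ζ(−1) = 1 −1. Then φ^n(0) = ζ^n(0) for all integers n ≥ 0. -/
import Mathlib


/-- The morphism `φ` on the alphabet `{0, 1, 0', -1}`, encoded as `Fin 4` with
`0 ↦ 0`, `1 ↦ 1`, `0' ↦ 2`, `-1 ↦ 3`. -/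
def phi : Fin 4 → List (Fin 4)
  | 0 => [0, 1, 2, 3]
  | 1 => [0, 1, 3, 1]
  | 2 => [2, 3, 0, 1]
  | 3 => [2, 3, 1, 3]

/-- The morphism `ζ` with `ζ(0) = ζ(0') = 0 1 0' -1`, `ζ(1) = 0 1 -1 1 0' -1`,
`ζ(-1) = 1 -1` (same encoding). -/
def zeta : Fin 4 → List (Fin 4)
  | 0 => [0, 1, 2, 3]
  | 1 => [0, 1, 3, 1, 2, 3]
  | 2 => [0, 1, 2, 3]
  | 3 => [1, 3]

/-- Extension of a map on letters to a morphism on words. -/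
def ext (h : Fin 4 → List (Fin 4)) : List (Fin 4) → List (Fin 4) :=
  fun l => l.flatMap h

/-- Words accepted by the 2-state automaton: in state `false` (E) the letters
`0` (stay) and `1` (go to S) are allowed; in state `true` (S) the letters
`2` (stay) and `3` (go to E) are allowed.  `Acc6 s w` means `w` is readable
starting from state `s` and ending in state E. -/
inductive Acc6 : Bool → List (Fin 4) → Prop
  | nil : Acc6 false []
  | c0 {w} : Acc6 false w → Acc6 false (0 :: w)
  | c1 {w} : Acc6 true w → Acc6 false (1 :: w)
  | c2 {w} : Acc6 true w → Acc6 true (2 :: w)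
  | c3 {w} : Acc6 false w → Acc6 true (3 :: w)

lemma ext_cons (h : Fin 4 → List (Fin 4)) (a : Fin 4) (w : List (Fin 4)) :
    ext h (a :: w) = h a ++ ext h w := by
  simp [ext]

/-- On accepted words, `ext zeta` equals `ext phi` up to the state-dependent
carry `[2,3]`. -/
lemma key : ∀ {s w}, Acc6 s w →
    ext phi w = (if s then ([2, 3] : List (Fin 4)) else []) ++ ext zeta w := by
  intro s w h
  induction h with
  | nil => simp [ext]
  | c0 _ ih => simp_all [ext_cons, phi, zeta]
  | c1 _ ih => simp_all [ext_cons, phi, zeta]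
  | c2 _ ih => simp_all [ext_cons, phi, zeta]
  | c3 _ ih => simp_all [ext_cons, phi, zeta]

/-- `ext phi` preserves acceptance (with the same starting state). -/
lemma acc_ext : ∀ {s w}, Acc6 s w → Acc6 s (ext phi w) := by
  intro s w h
  induction h with
  | nil => simpa [ext] using Acc6.nil
  | c0 _ ih =>
    rw [ext_cons]
    exact Acc6.c0 (Acc6.c1 (Acc6.c2 (Acc6.c3 ih)))
  | c1 _ ih =>
    rw [ext_cons]
    exact Acc6.c0 (Acc6.c1 (Acc6.c3 (Acc6.c1 ih)))
  | c2 _ ih =>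
    rw [ext_cons]
    exact Acc6.c2 (Acc6.c3 (Acc6.c0 (Acc6.c1 ih)))
  | c3 _ ih =>
    rw [ext_cons]
    exact Acc6.c2 (Acc6.c3 (Acc6.c1 (Acc6.c3 ih)))

/-- `φⁿ(0) = ζⁿ(0)` for all `n ≥ 0`. -/
theorem stmt_6 : ∀ n : ℕ, (ext phi)^[n] [0] = (ext zeta)^[n] [0] := by
  have main : ∀ n : ℕ, (ext phi)^[n] [0] = (ext zeta)^[n] [0] ∧
      Acc6 false ((ext phi)^[n] [0]) := by
    intro n
    induction n with
    | zero => exact ⟨rfl, Acc6.c0 Acc6.nil⟩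
    | succ n ih =>
      obtain ⟨heq, hacc⟩ := ih
      refine ⟨?_, ?_⟩
      · rw [Function.iterate_succ_apply', Function.iterate_succ_apply',
          ← heq, key hacc]
        simp
      · rw [Function.iterate_succ_apply']
        exact acc_ext hacc
  exact fun n => (main n).1
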